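/- For every twice-differentiable function ψ : ℝ → ℂ², the ladder operators of the harmonic Lévy-Leblond equation satisfy the anticommutation relation {b, b†} = 2β·H_sch pointwise: b(b†ψ)(x) + b†(bψ)(x) = −2ψ″(x) + βk x² ψ(x) − 2ik x γ₊ ψ(x) for all x ∈ ℝ. (Here 2β·H_sch ψ = −2ψ″ + βk x² ψ − 2ikx γ₊ ψ, with H_sch = (1/β)H_LL².) -/

import Mathlib

/-
With `a = √(βk/2)` and the constant matrix `M = -i√(k/(2β)) γ₊`, the ladder operators are
`b = (a x + M) + d/dx` and `b† = (a x + M) - d/dx`. In the anticommutator the terms `±[d/dx, a x] = ±a`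
cancel, leaving `{b, b†} = 2 (a x + M)² - 2 d²/dx²`. Since `γ₊² = 0`, `(a x + M)² = a² x² + 2 a x M`,
and `a² = βk/2`, `a √(k/(2β)) = k/2` give the claimed coefficients.
-/

open Matrix

noncomputable section

/-- The gamma matrix `γ¹ = [[1,0],[0,−1]]`. -/
def γ1 : Matrix (Fin 2) (Fin 2) ℂ := !![1, 0; 0, -1]

/-- The gamma matrix `γ₊ = [[0,1],[0,0]]`. -/
def γp : Matrix (Fin 2) (Fin 2) ℂ := !![0, 1; 0, 0]

/-- The gamma matrix `γ₋ = [[0,0],[1,0]]`. -/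
def γm : Matrix (Fin 2) (Fin 2) ℂ := !![0, 0; 1, 0]

/-- The harmonic Lévy-Leblond Hamiltonian:
`(H_LL ψ)(x) = β γ₋ ψ(x) − i γ¹ ψ′(x) + (k/2) x² γ₊ ψ(x)`. -/
def HLL (β k : ℝ) (ψ : ℝ → (Fin 2 → ℂ)) : ℝ → (Fin 2 → ℂ) :=
  fun x => (β : ℂ) • γm.mulVec (ψ x) - Complex.I • γ1.mulVec (deriv ψ x)
    + ((k / 2 * x ^ 2 : ℝ) : ℂ) • γp.mulVec (ψ x)

/-- The lowering operator:
`(bψ)(x) = √(βk/2)·x·ψ(x) + ψ′(x) − i√(k/(2β)) γ₊ ψ(x)`. -/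
def lower (β k : ℝ) (ψ : ℝ → (Fin 2 → ℂ)) : ℝ → (Fin 2 → ℂ) :=
  fun x => ((Real.sqrt (β * k / 2) * x : ℝ) : ℂ) • ψ x + deriv ψ x
    - (Complex.I * ((Real.sqrt (k / (2 * β)) : ℝ) : ℂ)) • γp.mulVec (ψ x)

/-- The raising operator:
`(b†ψ)(x) = √(βk/2)·x·ψ(x) − ψ′(x) − i√(k/(2β)) γ₊ ψ(x)`. -/
def raise (β k : ℝ) (ψ : ℝ → (Fin 2 → ℂ)) : ℝ → (Fin 2 → ℂ) :=
  fun x => ((Real.sqrt (β * k / 2) * x : ℝ) : ℂ) • ψ x - deriv ψ x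
    - (Complex.I * ((Real.sqrt (k / (2 * β)) : ℝ) : ℂ)) • γp.mulVec (ψ x)

section LadderOperators

variable {E : Type*} [NormedAddCommGroup E] [NormedSpace ℝ E]

def ladderOp (s a : ℝ) (M : E →L[ℝ] E) (ψ : ℝ → E) : ℝ → E :=
  fun x => (a * x) • ψ x + M (ψ x) + s • deriv ψ x

variable {a : ℝ} {M : E →L[ℝ] E} {ψ : ℝ → E} {x : ℝ}

theorem hasDerivAt_ladderOp (s : ℝ) (hψ : DifferentiableAt ℝ ψ x)
    (hψ' : DifferentiableAt ℝ (deriv ψ) x) :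
    HasDerivAt (ladderOp s a M ψ)
      (a • ψ x + (a * x) • deriv ψ x + M (deriv ψ x) + s • deriv (deriv ψ) x) x := by
  have hax : HasDerivAt (fun y : ℝ => a * y) a x := by
    simpa using (hasDerivAt_id x).const_mul a
  exact (((hax.smul hψ.hasDerivAt).add (M.hasFDerivAt.comp_hasDerivAt x hψ.hasDerivAt)).add
    (hψ'.hasDerivAt.const_smul s)).congr_deriv (by module)

theorem ladderOp_ladderOp_apply (s t : ℝ) (hψ : DifferentiableAt ℝ ψ x)
    (hψ' : DifferentiableAt ℝ (deriv ψ) x) :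
    ladderOp s a M (ladderOp t a M ψ) x
      = (a * x) ^ 2 • ψ x + (2 * a * x) • M (ψ x) + M (M (ψ x)) + (s * a) • ψ x
        + (s + t) • ((a * x) • deriv ψ x + M (deriv ψ x)) + (s * t) • deriv (deriv ψ) x := by
  simp only [ladderOp, (hasDerivAt_ladderOp t hψ hψ').deriv, map_add, map_smul]
  module

theorem ladderOp_anticomm_apply (s : ℝ) (hψ : DifferentiableAt ℝ ψ x)
    (hψ' : DifferentiableAt ℝ (deriv ψ) x) :
    ladderOp s a M (ladderOp (-s) a M ψ) x + ladderOp (-s) a M (ladderOp s a M ψ) x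
      = (2 * (a * x) ^ 2) • ψ x + (4 * a * x) • M (ψ x) + (2 : ℝ) • M (M (ψ x))
        - (2 * s ^ 2) • deriv (deriv ψ) x := by
  rw [ladderOp_ladderOp_apply _ _ hψ hψ', ladderOp_ladderOp_apply _ _ hψ hψ']
  module

end LadderOperators

def ladderShift (β k : ℝ) : (Fin 2 → ℂ) →L[ℝ] (Fin 2 → ℂ) :=
  ((-(Complex.I * (Real.sqrt (k / (2 * β)) : ℂ))) •
    LinearMap.toContinuousLinearMap (Matrix.toLin' γp)).restrictScalars ℝ

theorem ladderShift_apply (β k : ℝ) (v : Fin 2 → ℂ) :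
    ladderShift β k v = -((Complex.I * (Real.sqrt (k / (2 * β)) : ℂ)) • γp *ᵥ v) := by
  simp [ladderShift]

theorem γp_mul_γp : γp * γp = 0 := by
  ext i j
  fin_cases i <;> fin_cases j <;> simp [γp]

theorem ladderShift_ladderShift (β k : ℝ) (v : Fin 2 → ℂ) :
    ladderShift β k (ladderShift β k v) = 0 := by
  simp only [ladderShift_apply, Matrix.mulVec_neg, Matrix.mulVec_smul, Matrix.mulVec_mulVec,
    γp_mul_γp, Matrix.zero_mulVec, smul_zero, neg_zero]

theorem lower_eq_ladderOp (β k : ℝ) :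
    lower β k = ladderOp 1 (Real.sqrt (β * k / 2)) (ladderShift β k) := by
  ext ψ x : 2
  simp only [lower, ladderOp, ladderShift_apply, Complex.coe_smul, one_smul]
  abel

theorem raise_eq_ladderOp (β k : ℝ) :
    raise β k = ladderOp (-1) (Real.sqrt (β * k / 2)) (ladderShift β k) := by
  ext ψ x : 2
  simp only [raise, ladderOp, ladderShift_apply, Complex.coe_smul, neg_smul, one_smul]
  abel

/-- For every twice-differentiable `ψ : ℝ → ℂ²`, the ladder operators
satisfy the anticommutation relation `{b, b†} = 2β·H_sch` pointwise:
`b(b†ψ)(x) + b†(bψ)(x) = −2ψ″(x) + βk x² ψ(x) − 2ik x γ₊ ψ(x)`. -/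
theorem ladder_anticommutator (β k : ℝ) (hβ : 0 < β) (hk : 0 < k)
    (ψ : ℝ → (Fin 2 → ℂ))
    (hψ1 : Differentiable ℝ ψ) (hψ2 : Differentiable ℝ (deriv ψ)) :
    ∀ x : ℝ, lower β k (raise β k ψ) x + raise β k (lower β k ψ) x
      = (-2 : ℂ) • deriv (deriv ψ) x + ((β * k * x ^ 2 : ℝ) : ℂ) • ψ x
        - (2 * Complex.I * ((k * x : ℝ) : ℂ)) • γp.mulVec (ψ x) := by
  intro x
  have ha : ((√(β * k / 2) : ℝ) : ℂ) ^ 2 = β * k / 2 := by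
    exact_mod_cast Real.sq_sqrt (by positivity)
  have hac : ((√(β * k / 2) : ℝ) : ℂ) * ((√(k / (2 * β)) : ℝ) : ℂ) = k / 2 := by
    rw [← Complex.ofReal_mul, ← Real.sqrt_mul (by positivity),
      show β * k / 2 * (k / (2 * β)) = (k / 2) ^ 2 by field_simp, Real.sqrt_sq (by positivity)]
    push_cast
    rfl
  rw [lower_eq_ladderOp, raise_eq_ladderOp, ladderOp_anticomm_apply 1 (hψ1 x) (hψ2 x),
    ladderShift_ladderShift, ladderShift_apply]
  match_scalars
  · linear_combination 2 * (x : ℂ) ^ 2 * ha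
  · linear_combination -4 * Complex.I * x * hac
  · ring

end
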